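/- arXiv:1711.00906 — 2 statements merged into one kernel-verified Lean document; each statement's English description precedes it below -/
import Mathlib

section
/- Let k be a positive integer and let σ > 0, L, μ ∈ ℝ and c₀ < c₁ < c₂ be real numbers. Suppose α₁, …, α_{k+1} are nonnegative reals with Σ_{i=1}^{k+1} α_i = 1, and p₁, …, p_{k+1} are reals with p_i ≥ 3·σ·α_i for each i. Let P = Σ_{i=1}^{k+1} p_i and define the total cost C = c₀·(L − μ − P) + c₁·(Σ_{i=1}^{k} p_i) + c₂·p_{k+1}. Then C ≥ c₀·(L − μ − 3σ) + 3·c₁·σ, with equality if and only if p_{k+1} = 0 and P = 3σ. -/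
/-!
The excess of the cost over the bound is `(c₁ - c₀)(P - 3σ) + (c₂ - c₁) p_{k+1}`. Both terms are
nonnegative, since `P ≥ 3σ ∑ αᵢ = 3σ` and `p_{k+1} ≥ 3σ α_{k+1} ≥ 0`, and because `c₀ < c₁ < c₂`
their sum vanishes exactly when `P = 3σ` and `p_{k+1} = 0`.
-/

open Finset

lemma le_sum_of_forall_mul_le {ι : Type*} [Fintype ι] {α p : ι → ℝ} {a : ℝ}
    (hsum : ∑ i, α i = 1) (hp : ∀ i, a * α i ≤ p i) : a ≤ ∑ i, p i :=
  calc a = ∑ i, a * α i := by rw [← mul_sum, hsum, mul_one]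
    _ ≤ ∑ i, p i := sum_le_sum fun i _ => hp i

lemma cost_sub_bound_eq (c₀ c₁ c₂ R a S q : ℝ) :
    c₀ * (R - (S + q)) + c₁ * S + c₂ * q - (c₀ * (R - a) + c₁ * a) =
      (c₁ - c₀) * (S + q - a) + (c₂ - c₁) * q := by
  ring

lemma bound_le_cost_and_eq_iff {c₀ c₁ c₂ R a S q : ℝ} (h01 : c₀ < c₁) (h12 : c₁ < c₂)
    (ha : a ≤ S + q) (hq : 0 ≤ q) :
    c₀ * (R - a) + c₁ * a ≤ c₀ * (R - (S + q)) + c₁ * S + c₂ * q ∧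
      (c₀ * (R - (S + q)) + c₁ * S + c₂ * q = c₀ * (R - a) + c₁ * a ↔ q = 0 ∧ S + q = a) := by
  have hx : 0 ≤ (c₁ - c₀) * (S + q - a) := mul_nonneg (sub_nonneg.2 h01.le) (sub_nonneg.2 ha)
  have hy : 0 ≤ (c₂ - c₁) * q := mul_nonneg (sub_nonneg.2 h12.le) hq
  refine ⟨sub_nonneg.1 (cost_sub_bound_eq c₀ c₁ c₂ R a S q ▸ add_nonneg hx hy), ?_⟩
  rw [← sub_eq_zero, cost_sub_bound_eq, add_eq_zero_iff_of_nonneg hx hy, mul_eq_zero,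
    mul_eq_zero, sub_eq_zero, sub_eq_zero, sub_eq_zero, and_comm]
  simp only [h01.ne', h12.ne', false_or]

theorem stmt5_general (k : ℕ) (σ L μ c₀ c₁ c₂ : ℝ) (hσ : 0 < σ)
    (h01 : c₀ < c₁) (h12 : c₁ < c₂)
    (α p : Fin (k + 1) → ℝ)
    (hα : ∀ i, 0 ≤ α i) (hsum : ∑ i, α i = 1)
    (hp : ∀ i, 3 * σ * α i ≤ p i) :
    c₀ * (L - μ - ∑ i, p i) + c₁ * (∑ i : Fin k, p i.castSucc) + c₂ * p (Fin.last k)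
      ≥ c₀ * (L - μ - 3 * σ) + 3 * c₁ * σ ∧
    (c₀ * (L - μ - ∑ i, p i) + c₁ * (∑ i : Fin k, p i.castSucc) + c₂ * p (Fin.last k)
        = c₀ * (L - μ - 3 * σ) + 3 * c₁ * σ ↔
      p (Fin.last k) = 0 ∧ ∑ i, p i = 3 * σ) := by
  have hP := le_sum_of_forall_mul_le hsum hp
  have hlast : 0 ≤ p (Fin.last k) := (mul_nonneg (by positivity) (hα _)).trans (hp _)
  rw [Fin.sum_univ_castSucc] at hP ⊢
  rw [show 3 * c₁ * σ = c₁ * (3 * σ) by ring]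
  exact bound_le_cost_and_eq_iff h01 h12 hP hlast

/-- Cost-optimality core of Lemma 4 of the paper (Figure 1 example). Generators
are indexed by `Fin (k+1)`, with `Fin.last k` playing the role of generator
`k+1` and the first `k` indices the generators `1,…,k`. The total cost
`C = c₀(L−μ−P) + c₁ Σ_{i≤k} p_i + c₂ p_{k+1}` satisfies
`C ≥ c₀(L−μ−3σ) + 3c₁σ`, with equality iff `p_{k+1} = 0` and `P = 3σ`. -/
theorem stmt5 (k : ℕ) (hk : 0 < k) (σ L μ c₀ c₁ c₂ : ℝ) (hσ : 0 < σ)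
    (h01 : c₀ < c₁) (h12 : c₁ < c₂)
    (α p : Fin (k + 1) → ℝ)
    (hα : ∀ i, 0 ≤ α i) (hsum : ∑ i, α i = 1)
    (hp : ∀ i, 3 * σ * α i ≤ p i) :
    c₀ * (L - μ - ∑ i, p i) + c₁ * (∑ i : Fin k, p i.castSucc) + c₂ * p (Fin.last k)
      ≥ c₀ * (L - μ - 3 * σ) + 3 * c₁ * σ ∧
    (c₀ * (L - μ - ∑ i, p i) + c₁ * (∑ i : Fin k, p i.castSucc) + c₂ * p (Fin.last k)
        = c₀ * (L - μ - 3 * σ) + 3 * c₁ * σ ↔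
      p (Fin.last k) = 0 ∧ ∑ i, p i = 3 * σ) :=
  stmt5_general k σ L μ c₀ c₁ c₂ hσ h01 h12 α p hα hsum hp
end

section
/- Let k be a positive integer, let D be a natural number and σ > 0. For nonnegative reals α₁, …, α_{k+1} with Σ_{i=1}^{k+1} α_i = 1, define the total line-flow variance V(α) = σ²·((Σ_{i=1}^{k} α_i)² + Σ_{i=1}^{k} α_i² + (D+1)·α_{k+1}²). Then: (i) if α_i = 1/k for 1 ≤ i ≤ k and α_{k+1} = 0, then V(α) = σ²·(1 + 1/k); (ii) if (Σ_{i=1}^{k} α_i)² = 1/2 (i.e., the variance of the flow on line ab is reduced by 50%), then V(α) ≥ σ²·(1/2 + (D+1)·(1 − √(1/2))²). -/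
/-!
Halving the variance on line `ab` forces `S := Σ_{i≤k} α_i` to satisfy `S² = 1/2`, so
`S ≤ √(1/2)` and the remote generator must take up `α_{k+1} = 1 - S ≥ 1 - √(1/2)`; this share is
felt on each of the `D + 1` lines of the path, while the sum of the `α_i²` can only add to the total.
-/

open Finset

/-- `σ²` times the sum of the line-flow variances of the Figure 1 network, indexed as in the
paper: `α (Fin.last k)` is the participation factor `α_{k+1}` of the remote generator. -/
noncomputable def totalFlowVariance (k D : ℕ) (σ : ℝ) (α : Fin (k + 1) → ℝ) : ℝ :=
  σ ^ 2 * ((∑ i : Fin k, α i.castSucc) ^ 2 + (∑ i : Fin k, (α i.castSucc) ^ 2)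
    + ((D : ℝ) + 1) * α (Fin.last k) ^ 2)

theorem totalFlowVariance_of_uniform {k : ℕ} (hk : 0 < k) (D : ℕ) (σ : ℝ)
    {α : Fin (k + 1) → ℝ} (hlocal : ∀ i : Fin k, α i.castSucc = 1 / k)
    (hremote : α (Fin.last k) = 0) :
    totalFlowVariance k D σ α = σ ^ 2 * (1 + 1 / k) := by
  have hk0 : (k : ℝ) ≠ 0 := by positivity
  simp only [totalFlowVariance, hlocal, hremote, Fin.sum_const, nsmul_eq_mul]
  field_simp
  ring

theorem one_sub_sqrt_sq_le_one_sub_sq {s c : ℝ} (hs : s ^ 2 = c) :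
    (1 - √c) ^ 2 ≤ (1 - s) ^ 2 := by
  have hsc : s ≤ √c := Real.le_sqrt_of_sq_le hs.le
  have hc : 0 ≤ c := hs ▸ sq_nonneg s
  nlinarith [Real.sq_sqrt hc]

theorem le_totalFlowVariance_of_sq_sum_eq_half (k D : ℕ) (σ : ℝ) {α : Fin (k + 1) → ℝ}
    (hsum : ∑ i, α i = 1) (hhalf : (∑ i : Fin k, α i.castSucc) ^ 2 = 1 / 2) :
    σ ^ 2 * (1 / 2 + ((D : ℝ) + 1) * (1 - √(1 / 2)) ^ 2) ≤ totalFlowVariance k D σ α := by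
  have hremote : α (Fin.last k) = 1 - ∑ i : Fin k, α i.castSucc := by
    rw [Fin.sum_univ_castSucc] at hsum
    linarith
  have hpath : (1 - √(1 / 2)) ^ 2 ≤ α (Fin.last k) ^ 2 :=
    hremote ▸ one_sub_sqrt_sq_le_one_sub_sq hhalf
  have hlocal : 0 ≤ ∑ i : Fin k, (α i.castSucc) ^ 2 := sum_nonneg fun i _ => sq_nonneg _
  unfold totalFlowVariance
  rw [hhalf]
  gcongr
  linarith [mul_le_mul_of_nonneg_left hpath (by positivity : (0 : ℝ) ≤ (D : ℝ) + 1)]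

theorem stmt6_general (k D : ℕ) (hk : 0 < k) (σ : ℝ)
    (α : Fin (k + 1) → ℝ) (hsum : ∑ i, α i = 1) :
    ((∀ i : Fin k, α i.castSucc = 1 / k) → α (Fin.last k) = 0 →
      σ ^ 2 * ((∑ i : Fin k, α i.castSucc) ^ 2 + (∑ i : Fin k, (α i.castSucc) ^ 2)
          + ((D : ℝ) + 1) * α (Fin.last k) ^ 2) = σ ^ 2 * (1 + 1 / k)) ∧
    ((∑ i : Fin k, α i.castSucc) ^ 2 = 1 / 2 →
      σ ^ 2 * (1 / 2 + ((D : ℝ) + 1) * (1 - Real.sqrt (1 / 2)) ^ 2)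
        ≤ σ ^ 2 * ((∑ i : Fin k, α i.castSucc) ^ 2 + (∑ i : Fin k, (α i.castSucc) ^ 2)
            + ((D : ℝ) + 1) * α (Fin.last k) ^ 2)) :=
  ⟨totalFlowVariance_of_uniform hk D σ, le_totalFlowVariance_of_sq_sum_eq_half k D σ hsum⟩

/-- Variance computation of Section IV of the paper for the Figure 1 network:
`V(α) = σ²((Σ_{i≤k} α_i)² + Σ_{i≤k} α_i² + (D+1)α_{k+1}²)`. (i) With
`α_i = 1/k` for `i ≤ k` and `α_{k+1} = 0`, `V(α) = σ²(1 + 1/k)`. (ii) If the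
variance on line `ab` is halved, i.e. `(Σ_{i≤k} α_i)² = 1/2`, then
`V(α) ≥ σ²(1/2 + (D+1)(1 − √(1/2))²)`. -/
theorem stmt6 (k D : ℕ) (hk : 0 < k) (σ : ℝ) (hσ : 0 < σ)
    (α : Fin (k + 1) → ℝ) (hα : ∀ i, 0 ≤ α i) (hsum : ∑ i, α i = 1) :
    ((∀ i : Fin k, α i.castSucc = 1 / k) → α (Fin.last k) = 0 →
      σ ^ 2 * ((∑ i : Fin k, α i.castSucc) ^ 2 + (∑ i : Fin k, (α i.castSucc) ^ 2)
          + ((D : ℝ) + 1) * α (Fin.last k) ^ 2) = σ ^ 2 * (1 + 1 / k)) ∧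
    ((∑ i : Fin k, α i.castSucc) ^ 2 = 1 / 2 →
      σ ^ 2 * (1 / 2 + ((D : ℝ) + 1) * (1 - Real.sqrt (1 / 2)) ^ 2)
        ≤ σ ^ 2 * ((∑ i : Fin k, α i.castSucc) ^ 2 + (∑ i : Fin k, (α i.castSucc) ^ 2)
            + ((D : ℝ) + 1) * α (Fin.last k) ^ 2)) :=
  stmt6_general k D hk σ α hsum
end
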